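/- arXiv:1905.11065 — 3 statements merged into one kernel-verified Lean document; each statement's English description precedes it below -/
import Mathlib

section
/- Let x_{t+Δt} = x_t + φ(ΔW_t ψ(x_t) + Δb_t) with φ three times continuously differentiable, φ(0) = 0, ΔW_t = μ^W Δt + ε^W √Δt, Δb_t = μ^b Δt + ε^b √Δt, with ε^W, ε^b centered Gaussians as in Assumption 4. Then the instantaneous mean satisfies lim_{Δt↓0} E[x_{t+Δt} − x_t | x_t = x]/Δt = φ'(0)(μ^b + μ^W ψ(x)) + (1/2)φ''(0) diag(V(x)), where V(x) = Cov(ε^W ψ(x) + ε^b), pointwise in x, for any fixed x where ψ is locally bounded. -/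
/-!
Expand `φ` to second order at `0`: `φ y = φ'(0) y + φ''(0)/2 y² + R y` with
`|R y| ≤ C e^{k|y|} |y|³` by the growth bound on `φ'''`. The argument of `φ` is
`Y = a Δt + G √Δt`, where `G = (ε^W ψ(x))_d + (ε^b)_d` is centered and, as a sum of two
Gaussian variables, sub-Gaussian. Hence `E Y = a Δt`, `E Y² = a² Δt² + Δt V_dd`, and for
`Δt ≤ 1` the remainder is dominated by `C Δt^{3/2} e^{(k+3)(|a| + |G|)}`, whose expectation is
finite, so it contributes `O(√Δt)` after dividing by `Δt`.
-/

open MeasureTheory ProbabilityTheory Filter Set Real Topology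
open scoped NNReal

lemma abs_le_mul_abs_of_hasDerivAt {f f' : ℝ → ℝ} {y K : ℝ}
    (hf : ∀ t, HasDerivAt f (f' t) t) (hf0 : f 0 = 0)
    (hK : ∀ t ∈ uIcc 0 y, |f' t| ≤ K) : ∀ t ∈ uIcc 0 y, |f t| ≤ K * |y| := by
  intro t ht
  have hK0 : 0 ≤ K := (abs_nonneg _).trans (hK 0 left_mem_uIcc)
  have h := (convex_uIcc 0 y).norm_image_sub_le_of_norm_hasDerivWithin_le
    (fun u _ => (hf u).hasDerivWithinAt) hK left_mem_uIcc ht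
  simp only [hf0, sub_zero, Real.norm_eq_abs] at h
  exact h.trans (mul_le_mul_of_nonneg_left (by simpa using abs_sub_left_of_mem_uIcc ht) hK0)

lemma abs_sub_taylor_two_le {φ : ℝ → ℝ} (hφ : ContDiff ℝ 3 φ) {y M : ℝ}
    (hM : ∀ t ∈ uIcc 0 y, |iteratedDeriv 3 φ t| ≤ M) :
    |φ y - φ 0 - deriv φ 0 * y - iteratedDeriv 2 φ 0 / 2 * y ^ 2| ≤ M * |y| ^ 3 := by
  have hderiv (m : ℕ) (hm : m < 3) (t : ℝ) :
      HasDerivAt (iteratedDeriv m φ) (iteratedDeriv (m + 1) φ t) t := by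
    rw [iteratedDeriv_succ]
    exact (hφ.differentiable_iteratedDeriv m (by exact_mod_cast hm) t).hasDerivAt
  have hd0 (t : ℝ) : HasDerivAt φ (deriv φ t) t := by simpa using hderiv 0 (by norm_num) t
  have hd1 (t : ℝ) : HasDerivAt (deriv φ) (iteratedDeriv 2 φ t) t := by
    simpa [iteratedDeriv_one] using hderiv 1 (by norm_num) t
  have hd2 (t : ℝ) : HasDerivAt (iteratedDeriv 2 φ) (iteratedDeriv 3 φ t) t :=
    hderiv 2 (by norm_num) t
  have h2 := abs_le_mul_abs_of_hasDerivAt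
    (f := fun t => iteratedDeriv 2 φ t - iteratedDeriv 2 φ 0)
    (fun t => (hd2 t).sub_const _) (sub_self _) hM
  have h1 := abs_le_mul_abs_of_hasDerivAt
    (f := fun t => deriv φ t - deriv φ 0 - iteratedDeriv 2 φ 0 * t)
    (fun t => by
      simpa using ((hd1 t).sub_const (deriv φ 0)).fun_sub
        ((hasDerivAt_id' t).const_mul (iteratedDeriv 2 φ 0)))
    (by simp) h2
  have h0 := abs_le_mul_abs_of_hasDerivAt
    (f := fun t => φ t - φ 0 - deriv φ 0 * t - iteratedDeriv 2 φ 0 / 2 * t ^ 2)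
    (fun t => by
      refine ((((hd0 t).sub_const (φ 0)).fun_sub
        ((hasDerivAt_id' t).const_mul (deriv φ 0))).fun_sub
        ((hasDerivAt_pow 2 t).const_mul (iteratedDeriv 2 φ 0 / 2))).congr_deriv ?_
      push_cast; ring)
    (by simp) h1 y right_mem_uIcc
  exact h0.trans (le_of_eq (by ring))

lemma pow_three_mul_exp_le_of_abs_le {y s Q k : ℝ} (hs0 : 0 ≤ s) (hs1 : s ≤ 1) (hQ : 0 ≤ Q)
    (hk : 0 ≤ k) (hy : |y| ≤ s * Q) : |y| ^ 3 * exp (k * |y|) ≤ s ^ 3 * exp ((k + 3) * Q) := by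
  have hyQ : |y| ≤ Q := hy.trans (mul_le_of_le_one_left hQ hs1)
  calc |y| ^ 3 * exp (k * |y|) ≤ (s * Q) ^ 3 * exp (k * Q) := by gcongr
    _ ≤ (s * exp Q) ^ 3 * exp (k * Q) := by
        gcongr
        linarith [add_one_le_exp Q]
    _ = s ^ 3 * exp ((k + 3) * Q) := by
        rw [mul_pow, ← exp_nat_mul, mul_assoc, ← exp_add]; push_cast; ring_nf

lemma abs_comp_mul_add_mul_sqrt_le {R : ℝ → ℝ} {C k : ℝ} (hC : 0 ≤ C) (hk : 0 ≤ k)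
    (hR : ∀ y, |R y| ≤ C * exp (k * |y|) * |y| ^ 3) {Δt : ℝ} (hΔt : Δt ∈ Ioc 0 1) (a g : ℝ) :
    |R (a * Δt + g * √Δt)|
      ≤ C * (Δt * √Δt) * (exp ((k + 3) * |a|) * exp ((k + 3) * |g|)) := by
  obtain ⟨hΔt0, hΔt1⟩ := hΔt
  have hs0 : 0 ≤ √Δt := sqrt_nonneg Δt
  have hs1 : √Δt ≤ 1 := sqrt_le_one.mpr hΔt1
  have hss : √Δt * √Δt = Δt := mul_self_sqrt hΔt0.le
  have hy : |a * Δt + g * √Δt| ≤ √Δt * (|a| + |g|) := by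
    calc |a * Δt + g * √Δt| ≤ |a| * Δt + |g| * √Δt := by
          refine (abs_add_le _ _).trans ?_
          rw [abs_mul, abs_mul, abs_of_pos hΔt0, abs_of_nonneg hs0]
      _ ≤ |a| * √Δt + |g| * √Δt := by
          gcongr
          nlinarith
      _ = √Δt * (|a| + |g|) := by ring
  calc |R (a * Δt + g * √Δt)|
      ≤ C * (|a * Δt + g * √Δt| ^ 3 * exp (k * |a * Δt + g * √Δt|)) := by
        linarith [hR (a * Δt + g * √Δt)]
    _ ≤ C * (√Δt ^ 3 * exp ((k + 3) * (|a| + |g|))) :=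
        mul_le_mul_of_nonneg_left
          (pow_three_mul_exp_le_of_abs_le hs0 hs1 (by positivity) hk hy) hC
    _ = C * (Δt * √Δt) * (exp ((k + 3) * |a|) * exp ((k + 3) * |g|)) := by
        rw [← exp_add, pow_succ, sq, hss]; ring_nf

section Probability

variable {Ω : Type*} {mΩ : MeasurableSpace Ω} {μ : Measure Ω}

lemma aemeasurable_of_map_eq_gaussianReal {X : Ω → ℝ} {m : ℝ} {v : ℝ≥0}
    (hX : μ.map X = gaussianReal m v) : AEMeasurable X μ :=
  AEMeasurable.of_map_ne_zero (hX ▸ IsProbabilityMeasure.ne_zero _)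

lemma integral_eq_of_map_eq_gaussianReal {X : Ω → ℝ} {m : ℝ} {v : ℝ≥0}
    (hX : μ.map X = gaussianReal m v) : ∫ ω, X ω ∂μ = m := by
  rw [← integral_id_gaussianReal (μ := m) (v := v), ← hX]
  exact (integral_map (aemeasurable_of_map_eq_gaussianReal hX) aestronglyMeasurable_id).symm

lemma hasSubgaussianMGF_of_map_eq_gaussianReal {X : Ω → ℝ} {v : ℝ≥0}
    (hX : μ.map X = gaussianReal 0 v) : HasSubgaussianMGF X v μ := by
  rw [← HasSubgaussianMGF.id_map_iff (aemeasurable_of_map_eq_gaussianReal hX), hX]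
  exact ⟨integrable_exp_mul_gaussianReal, fun t => by simp [mgf_id_gaussianReal]⟩

lemma ProbabilityTheory.HasSubgaussianMGF.integrable_exp_mul_abs {X : Ω → ℝ} {c : ℝ≥0}
    (hX : HasSubgaussianMGF X c μ) (t : ℝ) : Integrable (fun ω => exp (t * |X ω|)) μ :=
  ProbabilityTheory.integrable_exp_mul_abs (hX.integrable_exp_mul t) (hX.integrable_exp_mul (-t))

lemma integral_add_mul_of_integral_eq_zero [IsProbabilityMeasure μ] {G : Ω → ℝ}
    (hG : Integrable G μ) (hG0 : ∫ ω, G ω ∂μ = 0) (u s : ℝ) :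
    ∫ ω, (u + G ω * s) ∂μ = u := by
  rw [integral_add (integrable_const u) (hG.mul_const s), integral_mul_const, hG0]
  simp

lemma integral_add_mul_sq_of_integral_eq_zero [IsProbabilityMeasure μ] {G : Ω → ℝ}
    (hG : Integrable G μ) (hG2 : Integrable (fun ω => G ω ^ 2) μ) (hG0 : ∫ ω, G ω ∂μ = 0)
    (u s : ℝ) : ∫ ω, (u + G ω * s) ^ 2 ∂μ = u ^ 2 + s ^ 2 * ∫ ω, G ω ^ 2 ∂μ := by
  have hexpand (ω : Ω) : (u + G ω * s) ^ 2 = u ^ 2 + (2 * u * s * G ω + s ^ 2 * G ω ^ 2) := by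
    ring
  have hlin : Integrable (fun ω => 2 * u * s * G ω + s ^ 2 * G ω ^ 2) μ :=
    (hG.const_mul _).add (hG2.const_mul _)
  simp_rw [hexpand]
  rw [integral_add (integrable_const _) hlin,
    integral_add (hG.const_mul _) (hG2.const_mul _), integral_const_mul, integral_const_mul, hG0]
  simp

lemma tendsto_integral_comp_mul_add_mul_sqrt_div_zero [IsFiniteMeasure μ] {R : ℝ → ℝ} {C k : ℝ}
    (hC : 0 ≤ C) (hk : 0 ≤ k) (hR : ∀ y, |R y| ≤ C * exp (k * |y|) * |y| ^ 3) {G : Ω → ℝ} {c : ℝ≥0}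
    (hG : HasSubgaussianMGF G c μ) (a : ℝ) :
    Tendsto (fun Δt => (∫ ω, R (a * Δt + G ω * √Δt) ∂μ) / Δt) (𝓝[>] 0) (𝓝 0) := by
  set I := ∫ ω, exp ((k + 3) * |a|) * exp ((k + 3) * |G ω|) ∂μ
  have hbound := (hG.integrable_exp_mul_abs (k + 3)).const_mul (exp ((k + 3) * |a|))
  have hsqrt : Tendsto (fun Δt => C * I * √Δt) (𝓝[>] 0) (𝓝 0) := by
    simpa using ((continuous_sqrt.tendsto 0).const_mul (C * I)).mono_left nhdsWithin_le_nhds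
  refine squeeze_zero_norm' ?_ hsqrt
  filter_upwards [Ioc_mem_nhdsGT zero_lt_one] with Δt hΔt
  have hint : ‖∫ ω, R (a * Δt + G ω * √Δt) ∂μ‖ ≤ C * (Δt * √Δt) * I := by
    rw [← integral_const_mul]
    exact norm_integral_le_of_norm_le (hbound.const_mul _)
      (ae_of_all _ fun ω => abs_comp_mul_add_mul_sqrt_le hC hk hR hΔt a (G ω))
  rw [norm_div, Real.norm_of_nonneg hΔt.1.le, div_le_iff₀ hΔt.1]
  linarith

theorem tendsto_integral_comp_mul_add_mul_sqrt_div [IsProbabilityMeasure μ] {φ : ℝ → ℝ}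
    (hφ : ContDiff ℝ 3 φ) (hφ0 : φ 0 = 0) {C k : ℝ} (hC : 0 ≤ C) (hk : 0 ≤ k)
    (hφ3 : ∀ y, |iteratedDeriv 3 φ y| ≤ C * exp (k * |y|)) {G : Ω → ℝ} {c : ℝ≥0}
    (hG : HasSubgaussianMGF G c μ) (hG0 : ∫ ω, G ω ∂μ = 0) (a : ℝ) :
    Tendsto (fun Δt => (∫ ω, φ (a * Δt + G ω * √Δt) ∂μ) / Δt) (𝓝[>] 0)
      (𝓝 (deriv φ 0 * a + iteratedDeriv 2 φ 0 / 2 * ∫ ω, G ω ^ 2 ∂μ)) := by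
  set R : ℝ → ℝ := fun y => φ y - deriv φ 0 * y - iteratedDeriv 2 φ 0 / 2 * y ^ 2 with hR_def
  have hR (y : ℝ) : |R y| ≤ C * exp (k * |y|) * |y| ^ 3 := by
    simpa [hR_def, hφ0] using abs_sub_taylor_two_le hφ fun t ht =>
      (hφ3 t).trans (by gcongr C * exp (k * ?_); simpa using abs_sub_left_of_mem_uIcc ht)
  have hG1 : Integrable G μ := hG.integrable
  have hG2 : Integrable (fun ω => G ω ^ 2) μ := (hG.memLp 2).integrable_sq
  have hexpand : ∀ Δt ∈ Ioc (0 : ℝ) 1, (∫ ω, φ (a * Δt + G ω * √Δt) ∂μ) / Δt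
      = deriv φ 0 * a + iteratedDeriv 2 φ 0 / 2 * (a ^ 2 * Δt + ∫ ω, G ω ^ 2 ∂μ)
        + (∫ ω, R (a * Δt + G ω * √Δt) ∂μ) / Δt := by
    intro Δt hΔt
    have hRint : Integrable (fun ω => R (a * Δt + G ω * √Δt)) μ := by
      refine Integrable.mono' ((hG.integrable_exp_mul_abs (k + 3)).const_mul _ |>.const_mul _)
        ?_ (ae_of_all _ fun ω => abs_comp_mul_add_mul_sqrt_le hC hk hR hΔt a (G ω))
      exact (by fun_prop : Continuous R).comp_aestronglyMeasurable (by fun_prop)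
    have hss : √Δt ^ 2 = Δt := sq_sqrt hΔt.1.le
    have hY1 : Integrable (fun ω => a * Δt + G ω * √Δt) μ :=
      (integrable_const _).add (hG1.mul_const _)
    have hY2 : Integrable (fun ω => (a * Δt + G ω * √Δt) ^ 2) μ :=
      (memLp_const (a * Δt) |>.add ((hG.memLp 2).mul_const √Δt)).integrable_sq
    have hφ_eq (y : ℝ) : φ y = deriv φ 0 * y + iteratedDeriv 2 φ 0 / 2 * y ^ 2 + R y := by
      rw [hR_def]; ring
    simp_rw [hφ_eq]
    rw [integral_add ((hY1.const_mul _).fun_add (hY2.const_mul _)) hRint,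
      integral_add (hY1.const_mul _) (hY2.const_mul _), integral_const_mul, integral_const_mul,
      integral_add_mul_of_integral_eq_zero hG1 hG0,
      integral_add_mul_sq_of_integral_eq_zero hG1 hG2 hG0, hss]
    generalize ∫ ω, R (a * Δt + G ω * √Δt) ∂μ = r
    field_simp [hΔt.1.ne']
  have hpoly : Tendsto
      (fun Δt => deriv φ 0 * a + iteratedDeriv 2 φ 0 / 2 * (a ^ 2 * Δt + ∫ ω, G ω ^ 2 ∂μ))
      (𝓝[>] 0) (𝓝 (deriv φ 0 * a + iteratedDeriv 2 φ 0 / 2 * ∫ ω, G ω ^ 2 ∂μ)) := by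
    refine tendsto_nhdsWithin_of_tendsto_nhds (Continuous.tendsto' (by fun_prop) _ _ ?_)
    simp
  have hlim := hpoly.add (tendsto_integral_comp_mul_add_mul_sqrt_div_zero hC hk hR hG a)
  rw [add_zero] at hlim
  refine hlim.congr' ?_
  filter_upwards [Ioc_mem_nhdsGT zero_lt_one] with Δt hΔt using (hexpand Δt hΔt).symm

end Probability

theorem stmt_10_general {Ω : Type*} [MeasureSpace Ω] [IsProbabilityMeasure (ℙ : Measure Ω)]
    {D : ℕ} (ψ : (Fin D → ℝ) → (Fin D → ℝ)) (x : Fin D → ℝ)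
    (φ : ℝ → ℝ) (hφ : ContDiff ℝ 3 φ) (hφ0 : φ 0 = 0)
    (k C : ℝ) (hk : 0 < k) (hC : 0 ≤ C)
    (hgrowth : ∀ y : ℝ,
      |iteratedDeriv 2 φ y| + |iteratedDeriv 3 φ y| ≤ C * Real.exp (k * |y|))
    (μW : Matrix (Fin D) (Fin D) ℝ) (μb : Fin D → ℝ)
    (SW : Matrix (Fin D × Fin D) (Fin D × Fin D) ℝ) (Sb : Matrix (Fin D) (Fin D) ℝ)
    (εW : Ω → Fin D → Fin D → ℝ) (εb : Ω → Fin D → ℝ)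
    -- ε^W is a centered Gaussian matrix with covariance SW between its entries:
    (hWgauss : ∀ c : Fin D × Fin D → ℝ,
      Measure.map (fun ω => ∑ p : Fin D × Fin D, c p * εW ω p.1 p.2) ℙ
        = gaussianReal 0 ((∑ p : Fin D × Fin D, ∑ q : Fin D × Fin D,
            c p * SW p q * c q).toNNReal))
    -- ε^b is a centered Gaussian vector with covariance Sb:
    (hbgauss : ∀ c : Fin D → ℝ,
      Measure.map (fun ω => ∑ d, c d * εb ω d) ℙ
        = gaussianReal 0 ((∑ d, ∑ d', c d * Sb d d' * c d').toNNReal))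
    -- the increment of the residual recursion, conditionally on the state x:
    (Δx : ℝ → Ω → Fin D → ℝ)
    (hΔx : ∀ Δt ω d, Δx Δt ω d
      = φ (∑ i, (μW d i * Δt + εW ω d i * Real.sqrt Δt) * ψ x i
            + (μb d * Δt + εb ω d * Real.sqrt Δt)))
    -- the covariance matrix V(x) of ε^W ψ(x) + ε^b:
    (V : Matrix (Fin D) (Fin D) ℝ)
    (hV : ∀ d d', V d d' = ∫ ω, (∑ i, εW ω d i * ψ x i + εb ω d)
                              * (∑ i, εW ω d' i * ψ x i + εb ω d')) :
    ∀ d : Fin D,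
      Tendsto (fun Δt : ℝ => (∫ ω, Δx Δt ω d) / Δt) (nhdsWithin 0 (Set.Ioi 0))
        (nhds (deriv φ 0 * (μb d + ∑ i, μW d i * ψ x i)
          + 1 / 2 * iteratedDeriv 2 φ 0 * V d d)) := by
  intro d
  obtain ⟨vW, hW⟩ : ∃ v, Measure.map (fun ω => ∑ i, εW ω d i * ψ x i) ℙ = gaussianReal 0 v :=
    ⟨_, by
      convert hWgauss fun p => if p.1 = d then ψ x p.2 else 0 using 2 with ω
      simp [Fintype.sum_prod_type, mul_comm]⟩
  obtain ⟨vb, hb⟩ : ∃ v, Measure.map (fun ω => εb ω d) ℙ = gaussianReal 0 v :=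
    ⟨_, by
      convert hbgauss (Pi.single d 1) using 2 with ω
      simp [Pi.single_apply]⟩
  have hWsub := hasSubgaussianMGF_of_map_eq_gaussianReal hW
  have hbsub := hasSubgaussianMGF_of_map_eq_gaussianReal hb
  have hG0 : ∫ ω, (∑ i, εW ω d i * ψ x i + εb ω d) = 0 := by
    rw [integral_add hWsub.integrable hbsub.integrable, integral_eq_of_map_eq_gaussianReal hW,
      integral_eq_of_map_eq_gaussianReal hb, add_zero]
  have hΔx' (Δt : ℝ) (ω : Ω) : Δx Δt ω d = φ ((μb d + ∑ i, μW d i * ψ x i) * Δt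
      + (∑ i, εW ω d i * ψ x i + εb ω d) * √Δt) := by
    rw [hΔx]
    congr 1
    simp only [add_mul, Finset.sum_add_distrib, Finset.sum_mul, mul_right_comm _ Δt,
      mul_right_comm _ √Δt]
    ring
  simp_rw [hΔx', hV d d, ← sq]
  convert tendsto_integral_comp_mul_add_mul_sqrt_div hφ hφ0 hC hk.le
    (fun y => (le_add_of_nonneg_left (abs_nonneg _)).trans (hgrowth y)) (hWsub.add hbsub) hG0 _
    using 2
  ring

/-- For the residual recursion
`x_{t+Δt} = x_t + φ(ΔW_t ψ(x_t) + Δb_t)` with `ΔW_t = μ^W Δt + ε^W √Δt`,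
`Δb_t = μ^b Δt + ε^b √Δt` and centered Gaussian `ε^W, ε^b`, the instantaneous
mean satisfies, coordinatewise and pointwise in the fixed state `x`:
`lim_{Δt↓0} E[Δx | x]/Δt = φ'(0)(μ^b + μ^W ψ(x)) + (1/2)φ''(0) diag(V(x))`
where `V(x) = Cov(ε^W ψ(x) + ε^b)`. -/
theorem stmt_10 {Ω : Type*} [MeasureSpace Ω] [IsProbabilityMeasure (ℙ : Measure Ω)]
    {D : ℕ} (ψ : (Fin D → ℝ) → (Fin D → ℝ)) (x : Fin D → ℝ)
    (φ : ℝ → ℝ) (hφ : ContDiff ℝ 3 φ) (hφ0 : φ 0 = 0)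
    (k C : ℝ) (hk : 0 < k) (hC : 0 ≤ C)
    (hgrowth : ∀ y : ℝ,
      |iteratedDeriv 2 φ y| + |iteratedDeriv 3 φ y| ≤ C * Real.exp (k * |y|))
    (μW : Matrix (Fin D) (Fin D) ℝ) (μb : Fin D → ℝ)
    (SW : Matrix (Fin D × Fin D) (Fin D × Fin D) ℝ) (Sb : Matrix (Fin D) (Fin D) ℝ)
    (hSW : SW.PosSemidef) (hSb : Sb.PosSemidef)
    (εW : Ω → Fin D → Fin D → ℝ) (εb : Ω → Fin D → ℝ)
    (hWmeas : Measurable εW) (hbmeas : Measurable εb)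
    -- ε^W is a centered Gaussian matrix with covariance SW between its entries:
    (hWgauss : ∀ c : Fin D × Fin D → ℝ,
      Measure.map (fun ω => ∑ p : Fin D × Fin D, c p * εW ω p.1 p.2) ℙ
        = gaussianReal 0 ((∑ p : Fin D × Fin D, ∑ q : Fin D × Fin D,
            c p * SW p q * c q).toNNReal))
    -- ε^b is a centered Gaussian vector with covariance Sb:
    (hbgauss : ∀ c : Fin D → ℝ,
      Measure.map (fun ω => ∑ d, c d * εb ω d) ℙ
        = gaussianReal 0 ((∑ d, ∑ d', c d * Sb d d' * c d').toNNReal))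
    (hindep : IndepFun εW εb ℙ)
    -- the increment of the residual recursion, conditionally on the state x:
    (Δx : ℝ → Ω → Fin D → ℝ)
    (hΔx : ∀ Δt ω d, Δx Δt ω d
      = φ (∑ i, (μW d i * Δt + εW ω d i * Real.sqrt Δt) * ψ x i
            + (μb d * Δt + εb ω d * Real.sqrt Δt)))
    -- the covariance matrix V(x) of ε^W ψ(x) + ε^b:
    (V : Matrix (Fin D) (Fin D) ℝ)
    (hV : ∀ d d', V d d' = ∫ ω, (∑ i, εW ω d i * ψ x i + εb ω d)
                              * (∑ i, εW ω d' i * ψ x i + εb ω d')) :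
    ∀ d : Fin D,
      Tendsto (fun Δt : ℝ => (∫ ω, Δx Δt ω d) / Δt) (nhdsWithin 0 (Set.Ioi 0))
        (nhds (deriv φ 0 * (μb d + ∑ i, μW d i * ψ x i)
          + 1 / 2 * iteratedDeriv 2 φ 0 * V d d)) :=
  stmt_10_general ψ x φ hφ hφ0 k C hk hC hgrowth μW μb SW Sb εW εb hWgauss hbgauss Δx hΔx V hV
end

section
/- Under the same residual recursion, for δ = 2 the higher moment condition holds: lim_{Δt↓0} E[(x_{t+Δt,d} − x_{t,d})⁴ | x_t = x]/Δt = 0 for every coordinate d and every fixed x. -/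
/-!
The increment is `φ(z)` with `z = Δt m + √Δt Z`, where `m` collects the drifts and
`Z = (ε^W ψ(x))_d + ε^b_d` is a sum of two Gaussian variables, so it has finite exponential
moments of every order (`e^{t(X+Y)} ≤ e^{2tX} + e^{2tY}`). Taylor's formula at `0`, with
`φ 0 = 0` and the exponential bound on `φ''`, gives `|φ z| ≤ a |z| e^{b|z|}`; since
`|z| ≤ √Δt (|m| + |Z|)` for `Δt ≤ 1`, we get `φ(z)⁴ ≤ Δt² G` with `G` an integrable exponential
of `|Z|`. Hence `E[(Δx_d)⁴] / Δt = O(Δt)`.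
-/

open MeasureTheory ProbabilityTheory Filter Real Set
open scoped Interval NNReal Topology

theorem abs_sub_sub_deriv_mul_le {f : ℝ → ℝ} (hf : ContDiff ℝ 2 f) {a b M : ℝ}
    (hM : ∀ t ∈ [[a, b]], |iteratedDeriv 2 f t| ≤ M) :
    |f b - f a - deriv f a * (b - a)| ≤ M * (b - a) ^ 2 := by
  have hf1 : Differentiable ℝ f := hf.differentiable (by norm_num)
  have hf2 : Differentiable ℝ (deriv f) := by
    simpa [iteratedDeriv_one] using hf.differentiable_iteratedDeriv 1 (by norm_num)
  have hderiv : ∀ t ∈ [[a, b]], ‖deriv f t - deriv f a‖ ≤ M * |b - a| := by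
    intro t ht
    have h := Convex.norm_image_sub_le_of_norm_deriv_le (fun u _ => hf2 u)
      (fun u hu => by simpa [iteratedDeriv_succ, iteratedDeriv_one] using hM u hu)
      (convex_uIcc a b) left_mem_uIcc ht
    have hM0 : 0 ≤ M := (abs_nonneg _).trans (hM a left_mem_uIcc)
    refine h.trans (mul_le_mul_of_nonneg_left ?_ hM0)
    exact abs_sub_le_of_uIcc_subset_uIcc (uIcc_subset_uIcc_left ht)
  have hg : ∀ t, HasDerivAt (fun t => f t - deriv f a * t) (deriv f t - deriv f a) t := fun t =>
    ((hf1 t).hasDerivAt.sub ((hasDerivAt_id t).const_mul (deriv f a))).congr_deriv (by simp)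
  have h := Convex.norm_image_sub_le_of_norm_hasDerivWithin_le (fun t _ => (hg t).hasDerivWithinAt)
    hderiv (convex_uIcc a b) left_mem_uIcc right_mem_uIcc
  calc |f b - f a - deriv f a * (b - a)|
      = ‖(f b - deriv f a * b) - (f a - deriv f a * a)‖ := by rw [Real.norm_eq_abs]; ring_nf
    _ ≤ M * |b - a| * ‖b - a‖ := h
    _ = M * (b - a) ^ 2 := by rw [Real.norm_eq_abs, mul_assoc, abs_mul_abs_self, sq]

theorem abs_le_mul_abs_mul_exp_of_abs_iteratedDeriv_two_le {φ : ℝ → ℝ} (hφ : ContDiff ℝ 2 φ)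
    (hφ0 : φ 0 = 0) {k C : ℝ} (hk : 0 ≤ k) (hC : 0 ≤ C)
    (h2 : ∀ y, |iteratedDeriv 2 φ y| ≤ C * exp (k * |y|)) (z : ℝ) :
    |φ z| ≤ (|deriv φ 0| + C) * |z| * exp ((k + 1) * |z|) := by
  have htaylor : |φ z - deriv φ 0 * z| ≤ C * exp (k * |z|) * z ^ 2 := by
    simpa [hφ0] using abs_sub_sub_deriv_mul_le hφ (a := 0) (b := z) fun t ht =>
      (h2 t).trans <| mul_le_mul_of_nonneg_left (exp_le_exp.2 <| mul_le_mul_of_nonneg_left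
        (by simpa using abs_sub_le_of_uIcc_subset_uIcc (uIcc_subset_uIcc_left ht)) hk) hC
  have hz : |z| ≤ exp |z| := by linarith [add_one_le_exp |z|]
  have h1 : 1 ≤ exp ((k + 1) * |z|) := one_le_exp (by positivity)
  have hsplit : exp ((k + 1) * |z|) = exp (k * |z|) * exp |z| := by rw [← exp_add]; ring_nf
  calc |φ z| ≤ |deriv φ 0| * |z| + C * exp (k * |z|) * |z| * |z| := by
        have := abs_sub_abs_le_abs_sub (φ z) (deriv φ 0 * z)
        rw [abs_mul] at this
        rw [← sq_abs, sq, ← mul_assoc] at htaylor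
        linarith
    _ ≤ |deriv φ 0| * |z| * exp ((k + 1) * |z|) + C * |z| * (exp (k * |z|) * exp |z|) := by
        have hC' : 0 ≤ C * exp (k * |z|) * |z| := by positivity
        nlinarith [mul_le_mul_of_nonneg_left h1 (by positivity : 0 ≤ |deriv φ 0| * |z|),
          mul_le_mul_of_nonneg_left hz hC']
    _ = (|deriv φ 0| + C) * |z| * exp ((k + 1) * |z|) := by rw [← hsplit]; ring

section ExponentialMoments

variable {Ω : Type*} {mΩ : MeasurableSpace Ω} {μ : Measure Ω} {X Y : Ω → ℝ}

theorem integrable_exp_mul_of_map_eq_gaussianReal {m : ℝ} {v : ℝ≥0}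
    (hX : μ.map X = gaussianReal m v) (t : ℝ) :
    Integrable (fun ω => exp (t * X ω)) μ := by
  have hXm : AEMeasurable X μ := aemeasurable_of_map_neZero (by rw [hX]; infer_instance)
  have h := integrable_exp_mul_gaussianReal (μ := m) (v := v) t
  rw [← hX] at h
  exact (integrable_map_measure (by fun_prop) hXm).mp h

theorem integrable_exp_mul_add (hX : ∀ t, Integrable (fun ω => exp (t * X ω)) μ)
    (hY : ∀ t, Integrable (fun ω => exp (t * Y ω)) μ) (t : ℝ) :
    Integrable (fun ω => exp (t * (X ω + Y ω))) μ := by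
  have hXm : AEMeasurable X μ := aemeasurable_of_integrable_exp_mul zero_ne_one (hX 0) (hX 1)
  have hYm : AEMeasurable Y μ := aemeasurable_of_integrable_exp_mul zero_ne_one (hY 0) (hY 1)
  refine ((hX (2 * t)).add (hY (2 * t))).mono' (by fun_prop) (ae_of_all _ fun ω => ?_)
  have hsq : ∀ s, exp (2 * t * s) = exp (t * s) ^ 2 := fun s => by rw [← exp_nat_mul]; ring_nf
  rw [norm_of_nonneg (exp_pos _).le, mul_add, exp_add, Pi.add_apply, hsq, hsq]
  nlinarith [sq_nonneg (exp (t * X ω) - exp (t * Y ω))]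

end ExponentialMoments

section FourthMoment

variable {f : ℝ → ℝ} {a b : ℝ}

theorem pow_four_le_of_abs_le_mul_exp (ha : 0 ≤ a) (hb : 0 ≤ b)
    (hf : ∀ z, |f z| ≤ a * |z| * exp (b * |z|)) {s u z : ℝ} (hs : 0 ≤ s) (hs1 : s ≤ 1)
    (hu : 0 ≤ u) (hz : |z| ≤ s * u) :
    f z ^ 4 ≤ s ^ 4 * (24 * a ^ 4 * exp ((4 * b + 1) * u)) := by
  have hzu : |z| ≤ u := hz.trans (mul_le_of_le_one_left hu hs1)
  have hfz : |f z| ≤ a * (s * u) * exp (b * u) := (hf z).trans (by gcongr)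
  have hu4 : u ^ 4 ≤ 24 * exp u := by
    have := pow_div_factorial_le_exp _ hu 4
    rw [div_le_iff₀ (by positivity)] at this
    simpa [Nat.factorial, mul_comm] using this
  have hexp : exp ((4 * b + 1) * u) = exp (b * u) ^ 4 * exp u := by
    rw [← exp_nat_mul, ← exp_add]; ring_nf
  calc f z ^ 4 = |f z| ^ 4 := (Even.pow_abs (by decide) _).symm
    _ ≤ (a * (s * u) * exp (b * u)) ^ 4 := by gcongr
    _ = s ^ 4 * a ^ 4 * exp (b * u) ^ 4 * u ^ 4 := by ring
    _ ≤ s ^ 4 * a ^ 4 * exp (b * u) ^ 4 * (24 * exp u) := by gcongr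
    _ = s ^ 4 * (24 * a ^ 4 * exp ((4 * b + 1) * u)) := by rw [hexp]; ring

variable {Ω : Type*} {mΩ : MeasurableSpace Ω} {μ : Measure Ω} {Z : Ω → ℝ}

theorem tendsto_integral_pow_four_div_nhdsGT_zero (ha : 0 ≤ a) (hb : 0 ≤ b)
    (hf : ∀ z, |f z| ≤ a * |z| * exp (b * |z|))
    (hZ : ∀ t, Integrable (fun ω => exp (t * Z ω)) μ) (m : ℝ) :
    Tendsto (fun t => (∫ ω, f (t * m + √t * Z ω) ^ 4 ∂μ) / t) (𝓝[>] 0) (𝓝 0) := by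
  set c := 4 * b + 1
  set G : Ω → ℝ := fun ω => 24 * a ^ 4 * exp (c * (|m| + |Z ω|))
  have hG : Integrable G μ := by
    simp_rw [G, mul_add, exp_add, ← mul_assoc]
    exact (integrable_exp_mul_abs (hZ c) (hZ (-c))).const_mul _
  have hpointwise : ∀ t ∈ Ioc (0 : ℝ) 1, ∀ ω, f (t * m + √t * Z ω) ^ 4 ≤ t ^ 2 * G ω := by
    intro t ht ω
    have hts : t ≤ √t := Real.le_sqrt_self_iff.2 ht.2
    have hz : |t * m + √t * Z ω| ≤ √t * (|m| + |Z ω|) := by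
      calc |t * m + √t * Z ω| ≤ t * |m| + √t * |Z ω| := by
            simpa [abs_mul, abs_of_pos ht.1, abs_of_nonneg (sqrt_nonneg t)] using
              abs_add_le (t * m) (√t * Z ω)
        _ ≤ √t * (|m| + |Z ω|) := by nlinarith [abs_nonneg m]
    have h := pow_four_le_of_abs_le_mul_exp ha hb hf (sqrt_nonneg t) (sqrt_le_one.2 ht.2)
      (by positivity) hz
    have hs4 : √t ^ 4 = t ^ 2 := by rw [show 4 = 2 * 2 from rfl, pow_mul, sq_sqrt ht.1.le]
    rwa [hs4] at h
  have hintegral : ∀ t ∈ Ioc (0 : ℝ) 1,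
      ∫ ω, f (t * m + √t * Z ω) ^ 4 ∂μ ≤ t ^ 2 * ∫ ω, G ω ∂μ := by
    intro t ht
    rw [← integral_const_mul]
    exact integral_mono_of_nonneg (ae_of_all _ fun ω => by positivity) (hG.const_mul _)
      (ae_of_all _ (hpointwise t ht))
  refine squeeze_zero' (g := fun t => t * ∫ ω, G ω ∂μ) ?_ ?_ ?_
  · filter_upwards [self_mem_nhdsWithin] with t ht
    exact div_nonneg (integral_nonneg fun ω => by positivity) (le_of_lt ht)
  · filter_upwards [Ioc_mem_nhdsGT zero_lt_one] with t ht
    rw [div_le_iff₀ ht.1]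
    linarith [hintegral t ht]
  · simpa using ((continuous_mul_const (∫ ω, G ω ∂μ)).tendsto 0).mono_left nhdsWithin_le_nhds

end FourthMoment

theorem stmt_12_general {Ω : Type*} [MeasureSpace Ω]
    {D : ℕ} (ψ : (Fin D → ℝ) → (Fin D → ℝ)) (x : Fin D → ℝ)
    (φ : ℝ → ℝ) (hφ : ContDiff ℝ 3 φ) (hφ0 : φ 0 = 0)
    (k C : ℝ) (hk : 0 < k) (hC : 0 ≤ C)
    (hgrowth : ∀ y : ℝ,
      |iteratedDeriv 2 φ y| + |iteratedDeriv 3 φ y| ≤ C * Real.exp (k * |y|))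
    (μW : Matrix (Fin D) (Fin D) ℝ) (μb : Fin D → ℝ)
    (SW : Matrix (Fin D × Fin D) (Fin D × Fin D) ℝ) (Sb : Matrix (Fin D) (Fin D) ℝ)
    (εW : Ω → Fin D → Fin D → ℝ) (εb : Ω → Fin D → ℝ)
    -- ε^W is a centered Gaussian matrix with covariance SW between its entries:
    (hWgauss : ∀ c : Fin D × Fin D → ℝ,
      Measure.map (fun ω => ∑ p : Fin D × Fin D, c p * εW ω p.1 p.2) ℙ
        = gaussianReal 0 ((∑ p : Fin D × Fin D, ∑ q : Fin D × Fin D,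
            c p * SW p q * c q).toNNReal))
    -- ε^b is a centered Gaussian vector with covariance Sb:
    (hbgauss : ∀ c : Fin D → ℝ,
      Measure.map (fun ω => ∑ d, c d * εb ω d) ℙ
        = gaussianReal 0 ((∑ d, ∑ d', c d * Sb d d' * c d').toNNReal))
    -- the increment of the residual recursion, conditionally on the state x:
    (Δx : ℝ → Ω → Fin D → ℝ)
    (hΔx : ∀ Δt ω d, Δx Δt ω d
      = φ (∑ i, (μW d i * Δt + εW ω d i * Real.sqrt Δt) * ψ x i
            + (μb d * Δt + εb ω d * Real.sqrt Δt))) :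
    ∀ d : Fin D,
      Tendsto (fun Δt : ℝ => (∫ ω, (Δx Δt ω d) ^ 4) / Δt)
        (nhdsWithin 0 (Set.Ioi 0)) (nhds 0) := by
  intro d
  obtain ⟨vA, hA⟩ : ∃ v, Measure.map (fun ω => ∑ i, εW ω d i * ψ x i) ℙ = gaussianReal 0 v := by
    refine ⟨_, Eq.trans ?_ (hWgauss fun p => if p.1 = d then ψ x p.2 else 0)⟩
    simp [Fintype.sum_prod_type, mul_comm]
  obtain ⟨vB, hB⟩ : ∃ v, Measure.map (fun ω => εb ω d) ℙ = gaussianReal 0 v := by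
    refine ⟨_, Eq.trans ?_ (hbgauss fun d' => if d' = d then 1 else 0)⟩
    simp
  have hZ := integrable_exp_mul_add (integrable_exp_mul_of_map_eq_gaussianReal hA)
    (integrable_exp_mul_of_map_eq_gaussianReal hB)
  have hφz := abs_le_mul_abs_mul_exp_of_abs_iteratedDeriv_two_le (hφ.of_le (by norm_num)) hφ0
    hk.le hC fun y => (le_add_of_nonneg_right (abs_nonneg _)).trans (hgrowth y)
  have hincrement : ∀ t ω, Δx t ω d = φ (t * (∑ i, μW d i * ψ x i + μb d)
      + √t * (∑ i, εW ω d i * ψ x i + εb ω d)) := by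
    intro t ω
    rw [hΔx]
    congr 1
    simp only [add_mul, mul_add, Finset.sum_add_distrib, Finset.mul_sum, mul_assoc,
      mul_left_comm t, mul_left_comm √t]
    ring
  simp_rw [hincrement]
  exact tendsto_integral_pow_four_div_nhdsGT_zero (by positivity) (by positivity) hφz hZ _

/-- Under the residual recursion, for `δ = 2` the higher-moment
condition of Assumption 1 holds: `lim_{Δt↓0} E[(Δx_d)⁴ | x]/Δt = 0` for every
coordinate `d` and every fixed state `x`. -/
theorem stmt_12 {Ω : Type*} [MeasureSpace Ω] [IsProbabilityMeasure (ℙ : Measure Ω)]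
    {D : ℕ} (ψ : (Fin D → ℝ) → (Fin D → ℝ)) (x : Fin D → ℝ)
    (φ : ℝ → ℝ) (hφ : ContDiff ℝ 3 φ) (hφ0 : φ 0 = 0)
    (k C : ℝ) (hk : 0 < k) (hC : 0 ≤ C)
    (hgrowth : ∀ y : ℝ,
      |iteratedDeriv 2 φ y| + |iteratedDeriv 3 φ y| ≤ C * Real.exp (k * |y|))
    (μW : Matrix (Fin D) (Fin D) ℝ) (μb : Fin D → ℝ)
    (SW : Matrix (Fin D × Fin D) (Fin D × Fin D) ℝ) (Sb : Matrix (Fin D) (Fin D) ℝ)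
    (hSW : SW.PosSemidef) (hSb : Sb.PosSemidef)
    (εW : Ω → Fin D → Fin D → ℝ) (εb : Ω → Fin D → ℝ)
    (hWmeas : Measurable εW) (hbmeas : Measurable εb)
    -- ε^W is a centered Gaussian matrix with covariance SW between its entries:
    (hWgauss : ∀ c : Fin D × Fin D → ℝ,
      Measure.map (fun ω => ∑ p : Fin D × Fin D, c p * εW ω p.1 p.2) ℙ
        = gaussianReal 0 ((∑ p : Fin D × Fin D, ∑ q : Fin D × Fin D,
            c p * SW p q * c q).toNNReal))
    -- ε^b is a centered Gaussian vector with covariance Sb: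
    (hbgauss : ∀ c : Fin D → ℝ,
      Measure.map (fun ω => ∑ d, c d * εb ω d) ℙ
        = gaussianReal 0 ((∑ d, ∑ d', c d * Sb d d' * c d').toNNReal))
    (hindep : IndepFun εW εb ℙ)
    -- the increment of the residual recursion, conditionally on the state x:
    (Δx : ℝ → Ω → Fin D → ℝ)
    (hΔx : ∀ Δt ω d, Δx Δt ω d
      = φ (∑ i, (μW d i * Δt + εW ω d i * Real.sqrt Δt) * ψ x i
            + (μb d * Δt + εb ω d * Real.sqrt Δt)))
    -- the covariance matrix V(x) of ε^W ψ(x) + ε^b: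
    (V : Matrix (Fin D) (Fin D) ℝ)
    (hV : ∀ d d', V d d' = ∫ ω, (∑ i, εW ω d i * ψ x i + εb ω d)
                              * (∑ i, εW ω d' i * ψ x i + εb ω d')) :
    ∀ d : Fin D,
      Tendsto (fun Δt : ℝ => (∫ ω, (Δx Δt ω d) ^ 4) / Δt)
        (nhdsWithin 0 (Set.Ioi 0)) (nhds 0) :=
  stmt_12_general ψ x φ hφ hφ0 k C hk hC hgrowth μW μb SW Sb εW εb hWgauss hbgauss Δx hΔx
end

section
/- If G ~ N(0, v) then E[φ(G√Δt)²] = φ'(0)² v Δt + o(Δt) as Δt ↓ 0, for φ ∈ C³ with φ(0) = 0 and second/third derivatives of at most exponential growth. -/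
open MeasureTheory ProbabilityTheory Filter Real Set
open scoped NNReal

/-!
Write `a = φ'(0)`. Two applications of the mean value inequality, with `|φ''|` bounded
by `C e^{k|g|}` on `[0, y]` for `|y| ≤ |g|`, give `|φ(y) - a y| ≤ C e^{k|g|} y²`. Factoring
`φ(y)² - (a y)² = (φ(y) - a y)(φ(y) + a y)` at `y = g √Δt`, `Δt ≤ 1`, bounds the difference by
`Δt^{3/2}` times a function of `g` that is integrable against the Gaussian, since all its
exponential moments are finite. As `E[(a G √Δt)²] = a² v Δt`, the error divided by `Δt` is
`O(√Δt)`.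
-/

lemma abs_sub_sub_deriv_mul_le_s14 {f : ℝ → ℝ} (hf : Differentiable ℝ f)
    (hf' : Differentiable ℝ (deriv f)) {y B : ℝ}
    (hB : ∀ x ∈ uIcc 0 y, |deriv (deriv f) x| ≤ B) :
    |f y - f 0 - deriv f 0 * y| ≤ B * y ^ 2 := by
  have habs : ∀ x ∈ uIcc 0 y, |x| ≤ |y| := fun x hx => by
    simpa using abs_sub_left_of_mem_uIcc hx
  have hB0 : 0 ≤ B := (abs_nonneg _).trans (hB 0 left_mem_uIcc)
  have hderiv : ∀ x ∈ uIcc 0 y, |deriv f x - deriv f 0| ≤ B * |y| := fun x hx => by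
    have := (convex_uIcc 0 y).norm_image_sub_le_of_norm_deriv_le
      (fun t _ => hf' t) (fun t ht => by simpa using hB t ht) left_mem_uIcc hx
    simp only [Real.norm_eq_abs, sub_zero] at this
    exact this.trans (mul_le_mul_of_nonneg_left (habs x hx) hB0)
  have := (convex_uIcc 0 y).norm_image_sub_le_of_norm_hasDerivWithin_le
    (f := fun t => f t - deriv f 0 * t) (f' := fun t => deriv f t - deriv f 0)
    (fun t _ => ((hf t).hasDerivAt.sub ((hasDerivAt_id t).const_mul _ |>.congr_deriv
      (mul_one _))).hasDerivWithinAt)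
    (fun t ht => by simpa using hderiv t ht) left_mem_uIcc right_mem_uIcc
  simp only [Real.norm_eq_abs, mul_zero, sub_zero] at this
  rw [sub_right_comm, ← sq_abs y, sq, ← mul_assoc]
  simpa using this

lemma abs_sq_sub_sq_le (u w : ℝ) : |u ^ 2 - w ^ 2| ≤ |u - w| * (|u - w| + 2 * |w|) := by
  rw [sq_sub_sq, abs_mul, mul_comm]
  gcongr
  calc |u + w| = |(u - w) + 2 * w| := by ring_nf
    _ ≤ |u - w| + 2 * |w| := by simpa [abs_mul] using abs_add_le (u - w) (2 * w)

lemma integrable_pow_abs_mul_exp_mul_abs_gaussianReal (μ : ℝ) (v : ℝ≥0) (n : ℕ) {c : ℝ}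
    (hc : 0 ≤ c) :
    Integrable (fun x => |x| ^ n * exp (c * |x|)) (gaussianReal μ v) := by
  simpa using integrable_pow_abs_mul_exp_add_of_integrable_exp_mul (v := 0) (t := c + 1)
    (X := fun x => x) (by simpa using integrable_exp_mul_gaussianReal (μ := μ) (v := v) _)
    (by simpa using integrable_exp_mul_gaussianReal (μ := μ) (v := v) _) hc
    (by rw [abs_of_pos (by linarith)]; linarith) n

lemma integral_sq_gaussianReal (v : ℝ≥0) : ∫ x, x ^ 2 ∂gaussianReal 0 v = v := by
  simpa [variance_eq_integral measurable_id'.aemeasurable] using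
    variance_fun_id_gaussianReal (μ := 0) (v := v)

section

variable {φ : ℝ → ℝ} {k C : ℝ}

lemma abs_sq_comp_mul_sub_sq_le (hφ : Differentiable ℝ φ)
    (hφ' : Differentiable ℝ (deriv φ)) (hφ0 : φ 0 = 0) (hk : 0 ≤ k) (hC : 0 ≤ C)
    (hgrowth : ∀ y, |deriv (deriv φ) y| ≤ C * exp (k * |y|)) {s : ℝ} (hs0 : 0 ≤ s)
    (hs1 : s ≤ 1) (g : ℝ) :
    |φ (g * s) ^ 2 - (deriv φ 0 * (g * s)) ^ 2| ≤
      s ^ 3 * (C * exp (k * |g|) * g ^ 2 *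
        (C * exp (k * |g|) * g ^ 2 + 2 * |deriv φ 0| * |g|)) := by
  set B := C * exp (k * |g|)
  have hgs : |g * s| ≤ |g| := by
    rw [abs_mul, abs_of_nonneg hs0]; exact mul_le_of_le_one_right (abs_nonneg g) hs1
  have hB : ∀ x ∈ uIcc 0 (g * s), |deriv (deriv φ) x| ≤ B := fun x hx => by
    have hxg : |x| ≤ |g * s| := by simpa using abs_sub_left_of_mem_uIcc hx
    refine (hgrowth x).trans (show C * exp (k * |x|) ≤ C * exp (k * |g|) by
      gcongr C * exp (k * ?_); exact hxg.trans hgs)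
  have htaylor : |φ (g * s) - deriv φ 0 * (g * s)| ≤ B * g ^ 2 * s ^ 2 := by
    simpa [hφ0, mul_pow, mul_assoc] using abs_sub_sub_deriv_mul_le_s14 hφ hφ' hB
  have hB0 : 0 ≤ B := by positivity
  calc _ ≤ |φ (g * s) - deriv φ 0 * (g * s)| *
        (|φ (g * s) - deriv φ 0 * (g * s)| + 2 * |deriv φ 0 * (g * s)|) := abs_sq_sub_sq_le _ _
    _ ≤ B * g ^ 2 * s ^ 2 * (B * g ^ 2 * s ^ 2 + 2 * (|deriv φ 0| * (|g| * s))) := by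
        rw [abs_mul, abs_mul, abs_of_nonneg hs0]; gcongr
    _ = s ^ 3 * (B * g ^ 2 * (B * g ^ 2 * s + 2 * |deriv φ 0| * |g|)) := by ring
    _ ≤ _ := by
        gcongr s ^ 3 * (B * g ^ 2 * (?_ + _))
        exact mul_le_of_le_one_right (by positivity) hs1

lemma abs_integral_sq_comp_mul_sub_le (hφ : Differentiable ℝ φ)
    (hφ' : Differentiable ℝ (deriv φ)) (hφ0 : φ 0 = 0) (hk : 0 ≤ k) (hC : 0 ≤ C)
    (hgrowth : ∀ y, |deriv (deriv φ) y| ≤ C * exp (k * |y|)) (v : ℝ≥0) {s : ℝ}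
    (hs0 : 0 ≤ s) (hs1 : s ≤ 1) :
    |∫ g, φ (g * s) ^ 2 ∂gaussianReal 0 v - deriv φ 0 ^ 2 * v * s ^ 2| ≤ s ^ 3 *
      ∫ g, C * exp (k * |g|) * g ^ 2 * (C * exp (k * |g|) * g ^ 2 + 2 * |deriv φ 0| * |g|)
        ∂gaussianReal 0 v := by
  set γ := gaussianReal 0 v
  set a := deriv φ 0
  set M := fun g : ℝ => C * exp (k * |g|) * g ^ 2 * (C * exp (k * |g|) * g ^ 2 + 2 * |a| * |g|)
  have hM : Integrable M γ := by
    refine (((integrable_pow_abs_mul_exp_mul_abs_gaussianReal 0 v 4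
      (by positivity : 0 ≤ 2 * k)).const_mul (C ^ 2)).add
      ((integrable_pow_abs_mul_exp_mul_abs_gaussianReal 0 v 3 hk).const_mul (2 * C * |a|))).congr
      (ae_of_all _ fun g => ?_)
    simp only [Pi.add_apply, M, ← sq_abs g, show 2 * k * |g| = k * |g| + k * |g| by ring, exp_add]
    ring
  have hsq : Integrable (fun g => (a * (g * s)) ^ 2) γ := by
    refine ((integrable_pow_of_mem_interior_integrableExpSet (X := fun x => x) (by simp [γ])
      2).const_mul ((a * s) ^ 2)).congr (ae_of_all _ fun g => ?_)
    ring
  have hdiff : Integrable (fun g => φ (g * s) ^ 2 - (a * (g * s)) ^ 2) γ := by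
    have := hφ.continuous
    exact (hM.const_mul (s ^ 3)).mono' (by fun_prop)
      (ae_of_all _ fun g => abs_sq_comp_mul_sub_sq_le hφ hφ' hφ0 hk hC hgrowth hs0 hs1 g)
  have hmain : ∫ g, (a * (g * s)) ^ 2 ∂γ = a ^ 2 * v * s ^ 2 := by
    simp_rw [mul_pow]
    rw [integral_const_mul, integral_mul_const, integral_sq_gaussianReal]
    ring
  have hφsq : Integrable (fun g => φ (g * s) ^ 2) γ :=
    (hdiff.add hsq).congr (ae_of_all _ fun g => by simp)
  calc _ = ‖∫ g, (φ (g * s) ^ 2 - (a * (g * s)) ^ 2) ∂γ‖ := by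
        rw [integral_sub hφsq hsq, hmain, Real.norm_eq_abs]
    _ ≤ ∫ g, s ^ 3 * M g ∂γ := norm_integral_le_of_norm_le (hM.const_mul _)
        (ae_of_all _ fun g => abs_sq_comp_mul_sub_sq_le hφ hφ' hφ0 hk hC hgrowth hs0 hs1 g)
    _ = _ := integral_const_mul _ _

end

/-- If `G ~ N(0, v)` then `E[φ(G√Δt)²] = φ'(0)² v Δt + o(Δt)` as
`Δt ↓ 0`, for `φ ∈ C³` with `φ(0) = 0` and second/third derivatives of at most
exponential growth. -/
theorem stmt_14 (v : NNReal)
    (φ : ℝ → ℝ) (hφ : ContDiff ℝ 3 φ) (hφ0 : φ 0 = 0)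
    (k C : ℝ) (hk : 0 < k) (hC : 0 ≤ C)
    (hgrowth : ∀ y : ℝ,
      |iteratedDeriv 2 φ y| + |iteratedDeriv 3 φ y| ≤ C * Real.exp (k * |y|)) :
    Tendsto (fun Δt : ℝ =>
        ((∫ g, (φ (g * Real.sqrt Δt)) ^ 2 ∂(gaussianReal 0 v))
          - (deriv φ 0) ^ 2 * (v : ℝ) * Δt) / Δt)
      (nhdsWithin 0 (Set.Ioi 0)) (nhds 0) := by
  have hφ' : Differentiable ℝ (deriv φ) :=
    ((contDiff_succ_iff_deriv (n := 2)).mp hφ).2.2.differentiable (by norm_num)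
  have hgrowth' : ∀ y, |deriv (deriv φ) y| ≤ C * exp (k * |y|) := fun y => by
    simpa [iteratedDeriv_succ] using (le_add_of_nonneg_right (abs_nonneg _)).trans (hgrowth y)
  set I := ∫ g, C * exp (k * |g|) * g ^ 2 * (C * exp (k * |g|) * g ^ 2 + 2 * |deriv φ 0| * |g|)
    ∂gaussianReal 0 v
  have hbound : ∀ Δt ∈ Ioc (0 : ℝ) 1, ‖((∫ g, (φ (g * √Δt)) ^ 2 ∂(gaussianReal 0 v))
      - (deriv φ 0) ^ 2 * (v : ℝ) * Δt) / Δt‖ ≤ √Δt * I := by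
    rintro Δt ⟨hΔt0, hΔt1⟩
    have h := abs_integral_sq_comp_mul_sub_le (hφ.differentiable (by norm_num)) hφ' hφ0 hk.le
      hC hgrowth' v (sqrt_nonneg Δt) (sqrt_le_one.mpr hΔt1)
    rw [sq_sqrt hΔt0.le, show √Δt ^ 3 = √Δt * Δt by rw [pow_succ', sq_sqrt hΔt0.le]] at h
    rw [norm_div, Real.norm_eq_abs, Real.norm_of_nonneg hΔt0.le, div_le_iff₀ hΔt0]
    linarith
  have hlim : Tendsto (fun Δt : ℝ => √Δt * I) (nhdsWithin 0 (Ioi 0)) (nhds 0) := by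
    simpa using
      ((continuous_sqrt.tendsto' 0 0 sqrt_zero).mono_left nhdsWithin_le_nhds).mul_const I
  exact squeeze_zero_norm' (eventually_of_mem (Ioc_mem_nhdsGT zero_lt_one) hbound) hlim
end
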